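/- Let L, L* ∈ ℝ^{n₁×n₂} both have rank r, and suppose ‖L − L*‖_F = a σ_r(L*) with a ≤ 1. Then ‖(L − L*) − P_{T_{L*}}(L − L*)‖_F ≤ (a/2) ‖L − L*‖_F, where P_{T_{L*}} is the projection onto the tangent space of the rank-r manifold at L*. -/

import Mathlib

open Matrix MeasureTheory ProbabilityTheory Filter
open scoped BigOperators ENNReal NNReal

noncomputable section

namespace RPCA

variable {n₁ n₂ r : ℕ}

/-- Frobenius norm of a real matrix. -/
def frob (A : Matrix (Fin n₁) (Fin n₂) ℝ) : ℝ :=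
  Real.sqrt (∑ i, ∑ j, (A i j) ^ 2)

/-- Frobenius inner product of two real matrices. -/
def finner (A B : Matrix (Fin n₁) (Fin n₂) ℝ) : ℝ :=
  ∑ i, ∑ j, A i j * B i j

/-- Spectral norm (operator norm) of a real matrix. -/
def spec (A : Matrix (Fin n₁) (Fin n₂) ℝ) : ℝ :=
  sSup {c | ∃ v : Fin n₂ → ℝ, (∑ j, (v j) ^ 2) = 1 ∧
    c = Real.sqrt (∑ i, (∑ j, A i j * v j) ^ 2)}

/-- Smallest singular value of a square matrix. -/
def sigmaMin (A : Matrix (Fin r) (Fin r) ℝ) : ℝ :=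
  sInf {c | ∃ v : Fin r → ℝ, (∑ k, (v k) ^ 2) = 1 ∧
    c = Real.sqrt (∑ i, (∑ k, A i k * v k) ^ 2)}

/-- The γ-th percentile (counting the fraction γ from the largest) of a multiset of reals. -/
def percentile (γ : ℝ) (s : Multiset ℝ) : ℝ :=
  (s.sort (· ≤ ·)).getD (s.card - ⌈γ * s.card⌉₊) 0

/-- Absolute values of the entries of row `i`. -/
def rowAbs (A : Matrix (Fin n₁) (Fin n₂) ℝ) (i : Fin n₁) : Multiset ℝ :=
  (Finset.univ : Finset (Fin n₂)).val.map fun j => |A i j|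

/-- Absolute values of the entries of column `j`. -/
def colAbs (A : Matrix (Fin n₁) (Fin n₂) ℝ) (j : Fin n₂) : Multiset ℝ :=
  (Finset.univ : Finset (Fin n₁)).val.map fun i => |A i j|

/-- The hard-thresholding operator `F_γ`: entries that are simultaneously above the γ-th
percentile of absolute values of their row and of their column are set to zero. -/
def hardThresh (γ : ℝ) (A : Matrix (Fin n₁) (Fin n₂) ℝ) : Matrix (Fin n₁) (Fin n₂) ℝ :=
  Matrix.of fun i j =>
    if percentile γ (rowAbs A i) < |A i j| ∧ percentile γ (colAbs A j) < |A i j| then 0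
    else A i j

/-- Absolute values of the observed entries of row `i`. -/
def rowAbsObs (Φ : Finset (Fin n₁ × Fin n₂)) (A : Matrix (Fin n₁) (Fin n₂) ℝ) (i : Fin n₁) :
    Multiset ℝ :=
  ((Φ.filter fun q => q.1 = i).val).map fun q => |A q.1 q.2|

/-- Absolute values of the observed entries of column `j`. -/
def colAbsObs (Φ : Finset (Fin n₁ × Fin n₂)) (A : Matrix (Fin n₁) (Fin n₂) ℝ) (j : Fin n₂) :
    Multiset ℝ :=
  ((Φ.filter fun q => q.2 = j).val).map fun q => |A q.1 q.2|

/-- Partially observed thresholding operator `F̃_γ`: `F̃_ij A = A i j` if `|A i j|` exceeds the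
γ-th percentile of absolute values of observed entries in both its row and its column,
and `0` otherwise. -/
def hardThreshObs (γ : ℝ) (Φ : Finset (Fin n₁ × Fin n₂)) (A : Matrix (Fin n₁) (Fin n₂) ℝ) :
    Matrix (Fin n₁) (Fin n₂) ℝ :=
  Matrix.of fun i j =>
    if percentile γ (rowAbsObs Φ A i) < |A i j| ∧ percentile γ (colAbsObs Φ A j) < |A i j| then
      A i j
    else 0

/-- `P_Φ`: zero out the entries outside the observed set `Φ`. -/
def projObs (Φ : Finset (Fin n₁ × Fin n₂)) (A : Matrix (Fin n₁) (Fin n₂) ℝ) :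
    Matrix (Fin n₁) (Fin n₂) ℝ :=
  Matrix.of fun i j => if (i, j) ∈ Φ then A i j else 0

/-- The sparsity class `S_{γ*}`: at most `γ* n₂` nonzero entries in each row and at most
`γ* n₁` nonzero entries in each column. -/
def SparseSet (γs : ℝ) (A : Matrix (Fin n₁) (Fin n₂) ℝ) : Prop :=
  (∀ i, (((Finset.univ : Finset (Fin n₂)).filter fun j => A i j ≠ 0).card : ℝ) ≤ γs * n₂) ∧
  (∀ j, (((Finset.univ : Finset (Fin n₁)).filter fun i => A i j ≠ 0).card : ℝ) ≤ γs * n₁)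

/-- Thin SVD `L = U (diagonal s) Vᵀ` with orthonormal `U, V` and positive decreasing
singular values `s`; this encodes that `L` has rank exactly `r`. -/
def IsThinSVD (L : Matrix (Fin n₁) (Fin n₂) ℝ) (U : Matrix (Fin n₁) (Fin r) ℝ)
    (s : Fin r → ℝ) (V : Matrix (Fin n₂) (Fin r) ℝ) : Prop :=
  Uᵀ * U = 1 ∧ Vᵀ * V = 1 ∧ Antitone s ∧ (∀ k, 0 < s k) ∧ L = U * Matrix.diagonal s * Vᵀ

/-- μ-incoherence of the orthonormal SVD factors `U, V`: every row of `U` has Euclidean norm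
at most `√(μ r / n₁)` and every row of `V` has Euclidean norm at most `√(μ r / n₂)`. -/
def Incoherent (μc : ℝ) (U : Matrix (Fin n₁) (Fin r) ℝ) (V : Matrix (Fin n₂) (Fin r) ℝ) :
    Prop :=
  (∀ i, Real.sqrt (∑ k, (U i k) ^ 2) ≤ Real.sqrt (μc * r / n₁)) ∧
  (∀ j, Real.sqrt (∑ k, (V j k) ^ 2) ≤ Real.sqrt (μc * r / n₂))

/-- Tangent-space projection `P_{T_X} D = UUᵀD + DVVᵀ − UUᵀDVVᵀ` at a rank-r point with
orthonormal factors `U, V`. -/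
def tangentProj (U : Matrix (Fin n₁) (Fin r) ℝ) (V : Matrix (Fin n₂) (Fin r) ℝ)
    (D : Matrix (Fin n₁) (Fin n₂) ℝ) : Matrix (Fin n₁) (Fin n₂) ℝ :=
  U * Uᵀ * D + D * (V * Vᵀ) - U * Uᵀ * D * (V * Vᵀ)

/-- `Z` is a best rank-r approximation of `M` in Frobenius norm. -/
def IsBestRankApprox (r : ℕ) (M Z : Matrix (Fin n₁) (Fin n₂) ℝ) : Prop :=
  Z.rank ≤ r ∧ ∀ W : Matrix (Fin n₁) (Fin n₂) ℝ, W.rank ≤ r → frob (M - Z) ≤ frob (M - W)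

/-- Orthographic retraction formula `M V (Uᵀ M V)⁻¹ Uᵀ M` where `M = X + δ`. -/
def orthoRetract (U : Matrix (Fin n₁) (Fin r) ℝ) (V : Matrix (Fin n₂) (Fin r) ℝ)
    (M : Matrix (Fin n₁) (Fin n₂) ℝ) : Matrix (Fin n₁) (Fin n₂) ℝ :=
  M * V * (Uᵀ * M * V)⁻¹ * (Uᵀ * M)

/-- `Lnext` is obtained from `Lk` by applying either the projective or the orthographic
retraction (for the rank-r manifold) to the tangent vector `δ` at `Lk`. -/
def IsRetractUpdate (r : ℕ) (Lk δ Lnext : Matrix (Fin n₁) (Fin n₂) ℝ) : Prop :=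
  IsBestRankApprox r (Lk + δ) Lnext ∨
  ∃ (U : Matrix (Fin n₁) (Fin r) ℝ) (s : Fin r → ℝ) (V : Matrix (Fin n₂) (Fin r) ℝ),
    IsThinSVD Lk U s V ∧ Lnext = orthoRetract U V (Lk + δ)

/-- One step of manifold gradient descent with the fully observed thresholded gradient:
`Lnext = R_{Lk}(−η P_{T_{Lk}} F_γ(Lk − Y))`. -/
def IsGradStep (γ η : ℝ) (r : ℕ) (Y Lk Lnext : Matrix (Fin n₁) (Fin n₂) ℝ) : Prop :=
  ∃ (U : Matrix (Fin n₁) (Fin r) ℝ) (s : Fin r → ℝ) (V : Matrix (Fin n₂) (Fin r) ℝ),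
    IsThinSVD Lk U s V ∧
    IsRetractUpdate r Lk (-(η • tangentProj U V (hardThresh γ (Lk - Y)))) Lnext

/-- One step of manifold gradient descent with the partially observed thresholded gradient:
`Lnext = R_{Lk}(−η P_{T_{Lk}} F̃_γ(Lk − Y))`. -/
def IsGradStepObs (γ η : ℝ) (r : ℕ) (Φ : Finset (Fin n₁ × Fin n₂))
    (Y Lk Lnext : Matrix (Fin n₁) (Fin n₂) ℝ) : Prop :=
  ∃ (U : Matrix (Fin n₁) (Fin r) ℝ) (s : Fin r → ℝ) (V : Matrix (Fin n₂) (Fin r) ℝ),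
    IsThinSVD Lk U s V ∧
    IsRetractUpdate r Lk (-(η • tangentProj U V (hardThreshObs γ Φ (Lk - Y)))) Lnext

end RPCA

/-!
Write `D = L - L*`, `P = U* U*ᵀ`, `Q = V* V*ᵀ` and `σ = σ_r(L*)`. The residual of the tangent
projection is `(1 - P) D (1 - Q)`. The rows of `L` lie in the range of `V` and `(1 - P) L* = 0`, so
`(1 - P) D = (1 - P) D V Vᵀ` and the residual has norm at most `‖(1 - P) D‖ ‖Vᵀ (1 - Q)‖`. Both
subspaces are `r`-dimensional, hence `‖Vᵀ (1 - Q)‖ = ‖V*ᵀ (1 - V Vᵀ)‖`, and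
`σ ‖V*ᵀ (1 - V Vᵀ)‖ ≤ ‖L* (1 - V Vᵀ)‖ = ‖P D (1 - V Vᵀ)‖ ≤ ‖P D‖`. Since
`‖(1 - P) D‖² + ‖P D‖² = ‖D‖²`, AM-GM gives `σ ‖(1 - P) D (1 - Q)‖ ≤ ‖D‖² / 2 = a σ ‖D‖ / 2`.
-/

namespace RPCA

variable {l m n r : ℕ}

section FrobeniusNorm

attribute [local instance] Matrix.frobeniusNormedAddCommGroup

theorem frob_eq_norm (A : Matrix (Fin m) (Fin n) ℝ) : frob A = ‖A‖ := by
  simp only [frob, Matrix.frobenius_norm_def, Real.norm_eq_abs, Real.rpow_two, sq_abs,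
    Real.sqrt_eq_rpow]

theorem frob_mul_le (A : Matrix (Fin l) (Fin m) ℝ) (B : Matrix (Fin m) (Fin n) ℝ) :
    frob (A * B) ≤ frob A * frob B := by
  simpa only [frob_eq_norm] using Matrix.frobenius_norm_mul A B

theorem frob_neg (A : Matrix (Fin m) (Fin n) ℝ) : frob (-A) = frob A := by
  simp only [frob_eq_norm, norm_neg]

theorem frob_transpose (A : Matrix (Fin m) (Fin n) ℝ) : frob Aᵀ = frob A := by
  simp only [frob_eq_norm, Matrix.frobenius_norm_transpose]

end FrobeniusNorm

theorem frob_nonneg (A : Matrix (Fin m) (Fin n) ℝ) : 0 ≤ frob A := Real.sqrt_nonneg _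

theorem frob_sq_eq_trace (A : Matrix (Fin m) (Fin n) ℝ) : frob A ^ 2 = trace (Aᵀ * A) := by
  rw [frob, Real.sq_sqrt (by positivity), Finset.sum_comm]
  simp only [trace, diag, mul_apply, transpose_apply, sq]

theorem frob_le_frob_of_sq_le {A : Matrix (Fin l) (Fin m) ℝ} {B : Matrix (Fin n) (Fin r) ℝ}
    (h : frob A ^ 2 ≤ frob B ^ 2) : frob A ≤ frob B :=
  le_of_sq_le_sq h (frob_nonneg B)

theorem frob_eq_frob_of_sq_eq {A : Matrix (Fin l) (Fin m) ℝ} {B : Matrix (Fin n) (Fin r) ℝ}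
    (h : frob A ^ 2 = frob B ^ 2) : frob A = frob B :=
  (sq_eq_sq₀ (frob_nonneg A) (frob_nonneg B)).1 h

theorem le_frob_diagonal_mul {σ : ℝ} {s : Fin r → ℝ} (hσ : 0 ≤ σ) (hs : ∀ k, σ ≤ s k)
    (X : Matrix (Fin r) (Fin n) ℝ) : σ * frob X ≤ frob (diagonal s * X) := by
  rw [frob, frob, ← Real.sqrt_sq hσ, ← Real.sqrt_mul (sq_nonneg _)]
  simp only [Finset.mul_sum, diagonal_mul, mul_pow]
  gcongr with k _ j
  exact hs k

section Orthonormal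

variable {U : Matrix (Fin m) (Fin r) ℝ} {V : Matrix (Fin n) (Fin r) ℝ}

theorem frob_mul_of_transpose_mul_self (hU : Uᵀ * U = 1) (C : Matrix (Fin r) (Fin n) ℝ) :
    frob (U * C) = frob C := by
  refine frob_eq_frob_of_sq_eq ?_
  rw [frob_sq_eq_trace, frob_sq_eq_trace, transpose_mul, Matrix.mul_assoc, ← Matrix.mul_assoc Uᵀ,
    hU, Matrix.one_mul]

theorem frob_mul_transpose_of_transpose_mul_self (hV : Vᵀ * V = 1)
    (C : Matrix (Fin m) (Fin r) ℝ) : frob (C * Vᵀ) = frob C := by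
  refine frob_eq_frob_of_sq_eq ?_
  rw [frob_sq_eq_trace, frob_sq_eq_trace, transpose_mul, transpose_transpose, Matrix.mul_assoc,
    trace_mul_comm]
  simp only [Matrix.mul_assoc, hV, Matrix.mul_one]

theorem trace_mul_transpose_of_transpose_mul_self (hV : Vᵀ * V = 1) : trace (V * Vᵀ) = r := by
  rw [trace_mul_comm, hV, trace_one, Fintype.card_fin]

theorem isSymm_mul_transpose (V : Matrix (Fin n) (Fin r) ℝ) : (V * Vᵀ).IsSymm := by
  rw [IsSymm, transpose_mul, transpose_transpose]

theorem isIdempotentElem_mul_transpose (hV : Vᵀ * V = 1) : IsIdempotentElem (V * Vᵀ) := by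
  rw [IsIdempotentElem, Matrix.mul_assoc, ← Matrix.mul_assoc Vᵀ, hV, Matrix.one_mul]

theorem mul_transpose_mul_self_of_transpose_mul_self (hU : Uᵀ * U = 1)
    (C : Matrix (Fin r) (Fin n) ℝ) : U * Uᵀ * (U * C) = U * C := by
  rw [Matrix.mul_assoc, ← Matrix.mul_assoc Uᵀ, hU, Matrix.one_mul]

end Orthonormal

section OrthogonalProjection

variable {Q : Matrix (Fin n) (Fin n) ℝ}

theorem frob_mul_sq_of_isSymm_of_isIdempotentElem (hQs : Q.IsSymm) (hQi : IsIdempotentElem Q)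
    (M : Matrix (Fin m) (Fin n) ℝ) : frob (M * Q) ^ 2 = trace (Mᵀ * M * Q) := by
  rw [frob_sq_eq_trace, transpose_mul, hQs.eq, Matrix.mul_assoc, trace_mul_comm, Matrix.mul_assoc,
    Matrix.mul_assoc, hQi.eq, Matrix.mul_assoc]

theorem frob_sq_eq_frob_mul_sq_add (hQs : Q.IsSymm) (hQi : IsIdempotentElem Q)
    (M : Matrix (Fin m) (Fin n) ℝ) : frob M ^ 2 = frob (M * Q) ^ 2 + frob (M * (1 - Q)) ^ 2 := by
  rw [frob_mul_sq_of_isSymm_of_isIdempotentElem hQs hQi,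
    frob_mul_sq_of_isSymm_of_isIdempotentElem (isSymm_one.sub hQs) hQi.one_sub, ← trace_add,
    ← Matrix.mul_add, add_sub_cancel, Matrix.mul_one, frob_sq_eq_trace]

theorem frob_mul_le_of_isSymm_of_isIdempotentElem (hQs : Q.IsSymm) (hQi : IsIdempotentElem Q)
    (M : Matrix (Fin m) (Fin n) ℝ) : frob (M * Q) ≤ frob M :=
  frob_le_frob_of_sq_le <| by
    linarith [frob_sq_eq_frob_mul_sq_add hQs hQi M, sq_nonneg (frob (M * (1 - Q)))]

theorem frob_sq_eq_frob_mul_sq_add_left {P : Matrix (Fin m) (Fin m) ℝ} (hPs : P.IsSymm)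
    (hPi : IsIdempotentElem P) (M : Matrix (Fin m) (Fin n) ℝ) :
    frob M ^ 2 = frob (P * M) ^ 2 + frob ((1 - P) * M) ^ 2 := by
  have h := frob_sq_eq_frob_mul_sq_add hPs hPi Mᵀ
  rwa [frob_transpose, ← frob_transpose (Mᵀ * P), ← frob_transpose (Mᵀ * (1 - P)), transpose_mul,
    transpose_mul, transpose_transpose, hPs.eq, (isSymm_one.sub hPs).eq] at h

end OrthogonalProjection

theorem frob_transpose_mul_one_sub_sq {V W : Matrix (Fin n) (Fin r) ℝ} (hV : Vᵀ * V = 1)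
    (hW : Wᵀ * W = 1) : frob (Vᵀ * (1 - W * Wᵀ)) ^ 2 = r - trace (V * Vᵀ * (W * Wᵀ)) := by
  have h := frob_sq_eq_frob_mul_sq_add (isSymm_mul_transpose W)
    (isIdempotentElem_mul_transpose hW) Vᵀ
  rw [frob_sq_eq_trace, frob_mul_sq_of_isSymm_of_isIdempotentElem (isSymm_mul_transpose W)
    (isIdempotentElem_mul_transpose hW), transpose_transpose,
    trace_mul_transpose_of_transpose_mul_self hV] at h
  linarith

/-- The sines of the principal angles between two `r`-dimensional subspaces do not depend on the
order of the subspaces. -/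
theorem frob_transpose_mul_one_sub_comm {V W : Matrix (Fin n) (Fin r) ℝ} (hV : Vᵀ * V = 1)
    (hW : Wᵀ * W = 1) : frob (Vᵀ * (1 - W * Wᵀ)) = frob (Wᵀ * (1 - V * Vᵀ)) := by
  refine frob_eq_frob_of_sq_eq ?_
  rw [frob_transpose_mul_one_sub_sq hV hW, frob_transpose_mul_one_sub_sq hW hV, trace_mul_comm]

theorem tangentProj_residual_eq (U : Matrix (Fin m) (Fin r) ℝ) (V : Matrix (Fin n) (Fin r) ℝ)
    (D : Matrix (Fin m) (Fin n) ℝ) :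
    D - tangentProj U V D = (1 - U * Uᵀ) * D * (1 - V * Vᵀ) := by
  simp only [tangentProj, Matrix.sub_mul, Matrix.mul_sub, Matrix.one_mul, Matrix.mul_one]
  abel

section TangentResidual

variable {Ustar : Matrix (Fin m) (Fin r) ℝ} {Vstar V : Matrix (Fin n) (Fin r) ℝ}
  {L Lstar : Matrix (Fin m) (Fin n) ℝ}

theorem frob_tangentProj_residual_le (hV : Vᵀ * V = 1) (hVs : Vstarᵀ * Vstar = 1)
    (hL : L * (V * Vᵀ) = L) (hLs : Ustar * Ustarᵀ * Lstar = Lstar) :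
    frob ((L - Lstar) - tangentProj Ustar Vstar (L - Lstar)) ≤
      frob ((1 - Ustar * Ustarᵀ) * (L - Lstar)) * frob (Vstarᵀ * (1 - V * Vᵀ)) := by
  set P := Ustar * Ustarᵀ
  have hL' : L * (1 - V * Vᵀ) = 0 := by rw [Matrix.mul_sub, Matrix.mul_one, hL, sub_self]
  have hLs' : (1 - P) * Lstar = 0 := by rw [Matrix.sub_mul, Matrix.one_mul, hLs, sub_self]
  have hDV : (1 - P) * (L - Lstar) = (1 - P) * (L - Lstar) * (V * Vᵀ) :=
    calc (1 - P) * (L - Lstar)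
        = (1 - P) * (L - Lstar) * (V * Vᵀ) + ((1 - P) * L - (1 - P) * Lstar) * (1 - V * Vᵀ) := by
          rw [← Matrix.mul_sub, ← Matrix.mul_add, add_sub_cancel, Matrix.mul_one]
      _ = (1 - P) * (L - Lstar) * (V * Vᵀ) := by
          rw [Matrix.sub_mul ((1 - P) * L), Matrix.mul_assoc (1 - P) L, hL', hLs', Matrix.mul_zero,
            Matrix.zero_mul, sub_zero, add_zero]
  have hres : (L - Lstar) - tangentProj Ustar Vstar (L - Lstar) =
      (1 - P) * (L - Lstar) * V * (Vᵀ * (1 - Vstar * Vstarᵀ)) := by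
    rw [tangentProj_residual_eq]
    conv_lhs => rw [hDV]
    simp only [Matrix.mul_assoc]
  calc frob ((L - Lstar) - tangentProj Ustar Vstar (L - Lstar))
      ≤ frob ((1 - P) * (L - Lstar) * V) * frob (Vᵀ * (1 - Vstar * Vstarᵀ)) :=
        hres ▸ frob_mul_le _ _
    _ ≤ frob ((1 - P) * (L - Lstar)) * frob (Vstarᵀ * (1 - V * Vᵀ)) := by
      rw [frob_transpose_mul_one_sub_comm hV hVs]
      gcongr
      · exact frob_nonneg _
      rw [← frob_mul_transpose_of_transpose_mul_self hV, Matrix.mul_assoc]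
      exact frob_mul_le_of_isSymm_of_isIdempotentElem (isSymm_mul_transpose V)
        (isIdempotentElem_mul_transpose hV) _

theorem mul_frob_transpose_mul_one_sub_le {σ : ℝ} {sstar : Fin r → ℝ} (hUs : Ustarᵀ * Ustar = 1)
    (hV : Vᵀ * V = 1) (hL : L * (V * Vᵀ) = L) (hσ : 0 ≤ σ) (hs : ∀ k, σ ≤ sstar k) :
    σ * frob (Vstarᵀ * (1 - V * Vᵀ)) ≤
      frob (Ustar * Ustarᵀ * (L - Ustar * diagonal sstar * Vstarᵀ)) := by
  have hL' : L * (1 - V * Vᵀ) = 0 := by rw [Matrix.mul_sub, Matrix.mul_one, hL, sub_self]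
  have key : Ustar * Ustarᵀ * (L - Ustar * diagonal sstar * Vstarᵀ) * (1 - V * Vᵀ) =
      -(Ustar * (diagonal sstar * (Vstarᵀ * (1 - V * Vᵀ)))) := by
    rw [Matrix.mul_sub (Ustar * Ustarᵀ), Matrix.sub_mul, Matrix.mul_assoc (Ustar * Ustarᵀ) L, hL',
      Matrix.mul_zero, zero_sub, Matrix.mul_assoc Ustar (diagonal sstar),
      mul_transpose_mul_self_of_transpose_mul_self hUs]
    simp only [Matrix.mul_assoc]
  calc σ * frob (Vstarᵀ * (1 - V * Vᵀ))
      ≤ frob (diagonal sstar * (Vstarᵀ * (1 - V * Vᵀ))) := le_frob_diagonal_mul hσ hs _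
    _ = frob (Ustar * Ustarᵀ * (L - Ustar * diagonal sstar * Vstarᵀ) * (1 - V * Vᵀ)) := by
      rw [key, frob_neg, frob_mul_of_transpose_mul_self hUs]
    _ ≤ frob (Ustar * Ustarᵀ * (L - Ustar * diagonal sstar * Vstarᵀ)) :=
      frob_mul_le_of_isSymm_of_isIdempotentElem (isSymm_one.sub (isSymm_mul_transpose V))
        (isIdempotentElem_mul_transpose hV).one_sub _

theorem mul_frob_tangentProj_residual_le {σ : ℝ} {sstar : Fin r → ℝ} (hUs : Ustarᵀ * Ustar = 1)
    (hVs : Vstarᵀ * Vstar = 1) (hV : Vᵀ * V = 1) (hL : L * (V * Vᵀ) = L) (hσ : 0 ≤ σ)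
    (hs : ∀ k, σ ≤ sstar k) :
    σ * frob ((L - Ustar * diagonal sstar * Vstarᵀ) -
        tangentProj Ustar Vstar (L - Ustar * diagonal sstar * Vstarᵀ)) ≤
      frob (L - Ustar * diagonal sstar * Vstarᵀ) ^ 2 / 2 := by
  set Lstar := Ustar * diagonal sstar * Vstarᵀ with hLstar
  have hLs : Ustar * Ustarᵀ * Lstar = Lstar := by
    rw [hLstar, Matrix.mul_assoc Ustar (diagonal sstar),
      mul_transpose_mul_self_of_transpose_mul_self hUs]
  set x := frob ((1 - Ustar * Ustarᵀ) * (L - Lstar))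
  set y := frob (Ustar * Ustarᵀ * (L - Lstar))
  have hpyth : frob (L - Lstar) ^ 2 = y ^ 2 + x ^ 2 :=
    frob_sq_eq_frob_mul_sq_add_left (isSymm_mul_transpose Ustar)
      (isIdempotentElem_mul_transpose hUs) (L - Lstar)
  calc σ * frob ((L - Lstar) - tangentProj Ustar Vstar (L - Lstar))
      ≤ σ * (x * frob (Vstarᵀ * (1 - V * Vᵀ))) :=
        mul_le_mul_of_nonneg_left (frob_tangentProj_residual_le hV hVs hL hLs) hσ
    _ = x * (σ * frob (Vstarᵀ * (1 - V * Vᵀ))) := by ring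
    _ ≤ x * y :=
        mul_le_mul_of_nonneg_left (mul_frob_transpose_mul_one_sub_le hUs hV hL hσ hs)
          (frob_nonneg _)
    _ ≤ frob (L - Lstar) ^ 2 / 2 := by linarith [two_mul_le_add_sq x y]

end TangentResidual

end RPCA

theorem tangent_approx_at_Lstar_general
    {n₁ n₂ r : ℕ} (hr : 0 < r) (a : ℝ)
    (L Lstar : Matrix (Fin n₁) (Fin n₂) ℝ)
    (U : Matrix (Fin n₁) (Fin r) ℝ) (s : Fin r → ℝ) (V : Matrix (Fin n₂) (Fin r) ℝ)
    (hSVD : RPCA.IsThinSVD L U s V)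
    (Ustar : Matrix (Fin n₁) (Fin r) ℝ) (sstar : Fin r → ℝ)
    (Vstar : Matrix (Fin n₂) (Fin r) ℝ)
    (hSVDstar : RPCA.IsThinSVD Lstar Ustar sstar Vstar)
    (ha : RPCA.frob (L - Lstar) = a * sstar ⟨r - 1, Nat.sub_lt hr Nat.one_pos⟩) :
    RPCA.frob ((L - Lstar) - RPCA.tangentProj Ustar Vstar (L - Lstar)) ≤
      a / 2 * RPCA.frob (L - Lstar) := by
  obtain ⟨-, hV, -, -, rfl⟩ := hSVD
  obtain ⟨hUs, hVs, hanti, hpos, rfl⟩ := hSVDstar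
  set σ := sstar ⟨r - 1, Nat.sub_lt hr Nat.one_pos⟩
  have hσs : ∀ k, σ ≤ sstar k := fun k => hanti (Fin.le_def.2 (Nat.le_sub_one_of_lt k.isLt))
  have hL : U * diagonal s * Vᵀ * (V * Vᵀ) = U * diagonal s * Vᵀ := by
    rw [Matrix.mul_assoc _ Vᵀ, ← Matrix.mul_assoc Vᵀ, hV, Matrix.one_mul]
  have key := RPCA.mul_frob_tangentProj_residual_le hUs hVs hV hL (hpos _).le hσs
  rw [ha] at key ⊢
  exact le_of_mul_le_mul_left (key.trans_eq (by ring)) (hpos _)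

/-- tangent-space approximation at `L*`. -/
theorem tangent_approx_at_Lstar
    {n₁ n₂ r : ℕ} (hr : 0 < r) (a : ℝ)
    (L Lstar : Matrix (Fin n₁) (Fin n₂) ℝ)
    (U : Matrix (Fin n₁) (Fin r) ℝ) (s : Fin r → ℝ) (V : Matrix (Fin n₂) (Fin r) ℝ)
    (hSVD : RPCA.IsThinSVD L U s V)
    (Ustar : Matrix (Fin n₁) (Fin r) ℝ) (sstar : Fin r → ℝ)
    (Vstar : Matrix (Fin n₂) (Fin r) ℝ)
    (hSVDstar : RPCA.IsThinSVD Lstar Ustar sstar Vstar)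
    (ha : RPCA.frob (L - Lstar) = a * sstar ⟨r - 1, Nat.sub_lt hr Nat.one_pos⟩)
    (ha1 : a ≤ 1) :
    RPCA.frob ((L - Lstar) - RPCA.tangentProj Ustar Vstar (L - Lstar)) ≤
      a / 2 * RPCA.frob (L - Lstar) :=
  tangent_approx_at_Lstar_general hr a L Lstar U s V hSVD Ustar sstar Vstar hSVDstar ha
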